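/- For every integer d ≥ 2 and every constant C_1 > 0 there exists a constant C > 0 with the following property: if n ∈ ℕ and T ⊂ [0,1)^d is a finite set such that for every s ∈ ℕ_0^d with s_1 + … + s_d = n and every trigonometric polynomial f ∈ 𝓣(R(s)) one has C_1·‖f‖_∞ ≤ max_{x ∈ T} |f(2πx)|, then disp(T) ≤ C·2^{−n}. -/

import Mathlib

/-- The dispersion of a set T ⊆ [0,1)^d: the supremum of volumes of axis-parallel boxes
prod_j [x_j, y_j) ⊆ [0,1)^d containing no point of T. -/
noncomputable def disp (d : ℕ) (T : Set (Fin d → ℝ)) : ℝ :=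
  sSup {V : ℝ | ∃ x y : Fin d → ℝ,
    (∀ j, 0 ≤ x j ∧ x j ≤ y j ∧ y j ≤ 1) ∧
    (∀ t ∈ T, ∃ j, t j < x j ∨ y j ≤ t j) ∧
    V = ∏ j, (y j - x j)}

/-- R(s) = {k in Z^d : |k_j| < 2^{s_j}, j = 1,...,d}, as a finset. -/
noncomputable def Rbox (d : ℕ) (s : Fin d → ℕ) : Finset (Fin d → ℤ) :=
  Finset.Icc (fun j => -((2 : ℤ) ^ (s j)) + 1) (fun j => (2 : ℤ) ^ (s j) - 1)

/-- The trigonometric polynomial with frequencies in Q and coefficients c: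
f(x) = sum_{k in Q} c_k e^{i(k,x)}. -/
noncomputable def trigPoly (d : ℕ) (Q : Finset (Fin d → ℤ)) (c : (Fin d → ℤ) → ℂ)
    (x : Fin d → ℝ) : ℂ :=
  ∑ k ∈ Q, c k * Complex.exp (Complex.I * ∑ j, (k j : ℂ) * (x j : ℂ))

/-- The uniform norm of f over [0,2π)^d. -/
noncomputable def supNorm (d : ℕ) (f : (Fin d → ℝ) → ℂ) : ℝ :=
  ⨆ x : ↥(Set.univ.pi fun _ : Fin d => Set.Ico (0 : ℝ) (2 * Real.pi)),
    ‖f (x : Fin d → ℝ)‖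

/-!
Suppose an empty box `∏ [x_j, y_j)` with sides `e_j` has volume `> (2K)^d 2^{-n}`, where
`K = 1 + 1/C₁`. Choosing `2^{s_j} ≈ K / e_j` and padding one coordinate gives `s` with
`|s|₁ = n`. The product of one-dimensional Dirichlet kernels of orders `2^{s_j}`, centred at
the midpoint of the box, lies in `𝓣(R(s))` and attains its maximum `P = ∏ (2^{s_j+1} - 1)`
there. Every point of `T` misses the box in some coordinate `j`, where it has distance at least
`e_j / 2` to the centre modulo 1, so that kernel factor is at most `1 / e_j ≤ (2^{s_j+1} - 1) / K`.
Hence `max_T |f| ≤ P / K < C₁ ‖f‖_∞`, contradicting the sampling inequality.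
-/

open Finset Real

/-- Frequencies `|m| < N`, so that `R(s)` is the product of the frequency sets with
`N = 2 ^ s j`. -/
noncomputable def dirichletKernel (N : ℕ) (u : ℝ) : ℂ :=
  ∑ m ∈ Icc (-(N : ℤ) + 1) (N - 1), Complex.exp (Complex.I * m * u)

lemma card_Icc_neg_add_one_sub_one {N : ℕ} (hN : 1 ≤ N) :
    ((Icc (-(N : ℤ) + 1) (N - 1)).card : ℝ) = 2 * N - 1 := by
  rw [Int.card_Icc, show (N : ℤ) - 1 + 1 - (-N + 1) = ((2 * N - 1 : ℕ) : ℤ) by omega,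
    Int.toNat_natCast, Nat.cast_sub (by omega)]
  push_cast; ring

lemma dirichletKernel_zero {N : ℕ} (hN : 1 ≤ N) : dirichletKernel N 0 = 2 * N - 1 := by
  simp only [dirichletKernel, Complex.ofReal_zero, mul_zero, Complex.exp_zero, sum_const,
    nsmul_eq_mul, mul_one]
  exact_mod_cast card_Icc_neg_add_one_sub_one hN

lemma norm_dirichletKernel_le {N : ℕ} (hN : 1 ≤ N) (u : ℝ) :
    ‖dirichletKernel N u‖ ≤ 2 * N - 1 := by
  refine (norm_sum_le _ _).trans_eq ?_
  simp_rw [mul_assoc, ← Complex.ofReal_intCast, ← Complex.ofReal_mul, Complex.norm_exp_I_mul_ofReal,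
    sum_const, nsmul_eq_mul, mul_one]
  exact card_Icc_neg_add_one_sub_one hN

lemma dirichletKernel_eq_mul_geom_sum (N : ℕ) (u : ℝ) :
    dirichletKernel N u = Complex.exp (Complex.I * (-(N : ℤ) + 1) * u) *
      ∑ r ∈ range (2 * N - 1), Complex.exp (Complex.I * u) ^ r := by
  rw [dirichletKernel, mul_sum]
  refine sum_nbij' (fun m => (m + N - 1).toNat) (fun r => (r : ℤ) - N + 1) ?_ ?_ ?_ ?_ ?_
  · intro m hm; simp only [mem_Icc, mem_range] at hm ⊢; omega
  · intro r hr; simp only [mem_Icc, mem_range] at hr ⊢; omega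
  · intro m hm; simp only [mem_Icc] at hm; omega
  · intro r hr; simp only [mem_range] at hr; omega
  · intro m hm
    simp only [mem_Icc] at hm
    rw [← Complex.exp_nat_mul, ← Complex.exp_add]
    have : (((m + N - 1).toNat : ℕ) : ℂ) = ((m + N - 1 : ℤ) : ℂ) := by norm_cast; omega
    rw [this]; push_cast; ring_nf

lemma norm_dirichletKernel_le_inv_abs_sin (N : ℕ) {u : ℝ} (hu : sin (u / 2) ≠ 0) :
    ‖dirichletKernel N u‖ ≤ |sin (u / 2)|⁻¹ := by
  have hnorm : ‖Complex.exp (Complex.I * u) - 1‖ = 2 * |sin (u / 2)| := by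
    rw [Complex.norm_exp_I_mul_ofReal_sub_one, norm_mul, Real.norm_ofNat, Real.norm_eq_abs]
  have hz : Complex.exp (Complex.I * u) ≠ 1 := fun h => by
    rw [h, sub_self, norm_zero] at hnorm; exact hu (abs_eq_zero.mp (by linarith))
  have hphase : ‖Complex.exp (Complex.I * (-(N : ℤ) + 1) * u)‖ = 1 := by
    rw [Complex.norm_exp]; simp
  rw [dirichletKernel_eq_mul_geom_sum, norm_mul, hphase, one_mul, geom_sum_eq hz, norm_div, hnorm]
  have hpow : ‖Complex.exp (Complex.I * u) ^ (2 * N - 1) - 1‖ ≤ 2 := by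
    refine (norm_sub_le _ _).trans ?_
    rw [norm_pow, Complex.norm_exp_I_mul_ofReal, one_pow, norm_one]; norm_num
  calc ‖Complex.exp (Complex.I * u) ^ (2 * N - 1) - 1‖ / (2 * |sin (u / 2)|)
      ≤ 2 / (2 * |sin (u / 2)|) := by gcongr
    _ = |sin (u / 2)|⁻¹ := by field_simp

lemma two_mul_le_sin_pi_mul {v : ℝ} (h₀ : 0 ≤ v) (h₁ : v ≤ 1 / 2) : 2 * v ≤ sin (π * v) := by
  have := mul_le_sin (by positivity : 0 ≤ π * v) (by nlinarith [pi_pos])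
  rwa [← mul_assoc, div_mul_cancel₀ _ pi_ne_zero] at this

lemma two_mul_le_abs_sin_pi_mul {δ w : ℝ} (h₁ : δ ≤ |w|) (h₂ : |w| ≤ 1 - δ) :
    2 * δ ≤ |sin (π * w)| := by
  rcases le_or_gt δ 0 with hδ | hδ
  · exact (mul_nonpos_of_nonneg_of_nonpos zero_le_two hδ).trans (abs_nonneg _)
  wlog hw : 0 ≤ w generalizing w
  · simpa [abs_neg] using this (w := -w) (by simpa) (by simpa) (by linarith)
  rw [abs_of_nonneg hw] at h₁ h₂
  rcases le_total w (1 / 2) with hw' | hw'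
  · have := two_mul_le_sin_pi_mul hw hw'
    rw [abs_of_nonneg (by linarith)]; linarith
  · have := two_mul_le_sin_pi_mul (v := 1 - w) (by linarith) (by linarith)
    rw [show π * (1 - w) = π - π * w by ring, sin_pi_sub] at this
    rw [abs_of_nonneg (by linarith)]; linarith

lemma abs_sub_midpoint_mem_Icc {x y t : ℝ} (hx : 0 ≤ x) (hxy : x ≤ y) (hy : y ≤ 1)
    (ht : t ∈ Set.Ico (0 : ℝ) 1) (hout : t < x ∨ y ≤ t) :
    |t - (x + y) / 2| ∈ Set.Icc ((y - x) / 2) (1 - (y - x) / 2) := by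
  obtain ⟨ht₀, ht₁⟩ := ht
  rcases hout with h | h
  · rw [abs_of_nonpos (by linarith)]; constructor <;> linarith
  · rw [abs_of_nonneg (by linarith)]; constructor <;> linarith

lemma norm_dirichletKernel_le_inv_of_lt_or_le {x y t : ℝ} (hx : 0 ≤ x) (hxy : x < y) (hy : y ≤ 1)
    (ht : t ∈ Set.Ico (0 : ℝ) 1) (hout : t < x ∨ y ≤ t) (N : ℕ) :
    ‖dirichletKernel N (2 * π * t - 2 * π * ((x + y) / 2))‖ ≤ (y - x)⁻¹ := by
  obtain ⟨h₁, h₂⟩ := abs_sub_midpoint_mem_Icc hx hxy.le hy ht hout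
  have hsin := two_mul_le_abs_sin_pi_mul h₁ h₂
  have hpos : 0 < y - x := sub_pos.mpr hxy
  have hsin' : y - x ≤ |sin ((2 * π * t - 2 * π * ((x + y) / 2)) / 2)| := by
    rw [show (2 * π * t - 2 * π * ((x + y) / 2)) / 2 = π * (t - (x + y) / 2) by ring]; linarith
  exact (norm_dirichletKernel_le_inv_abs_sin N (abs_ne_zero.mp (by linarith))).trans
    (inv_anti₀ hpos hsin')

lemma trigPoly_translate (d : ℕ) (Q : Finset (Fin d → ℤ)) (θ z : Fin d → ℝ) :
    trigPoly d Q (fun k => Complex.exp (-(Complex.I * ∑ j, (k j : ℂ) * θ j))) z =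
      trigPoly d Q 1 (z - θ) := by
  simp only [trigPoly, Pi.one_apply, one_mul, ← Complex.exp_add, Pi.sub_apply,
    Complex.ofReal_sub, mul_sub, sum_sub_distrib]
  congr! 2; ring

lemma Rbox_eq_piFinset (d : ℕ) (s : Fin d → ℕ) :
    Rbox d s = Fintype.piFinset fun j => Icc (-((2 ^ s j : ℕ) : ℤ) + 1) ((2 ^ s j : ℕ) - 1) := by
  rw [Rbox, Pi.Icc_eq]; push_cast; rfl

lemma trigPoly_Rbox_one_eq_prod_dirichletKernel (d : ℕ) (s : Fin d → ℕ) (z : Fin d → ℝ) :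
    trigPoly d (Rbox d s) 1 z = ∏ j, dirichletKernel (2 ^ s j) (z j) := by
  simp only [trigPoly, dirichletKernel, Pi.one_apply, one_mul, mul_sum, Complex.exp_sum,
    Rbox_eq_piFinset, prod_univ_sum, mul_assoc]

lemma norm_trigPoly_le_sum (d : ℕ) (Q : Finset (Fin d → ℤ)) (c : (Fin d → ℤ) → ℂ)
    (z : Fin d → ℝ) : ‖trigPoly d Q c z‖ ≤ ∑ k ∈ Q, ‖c k‖ := by
  refine (norm_sum_le _ _).trans (sum_le_sum fun k _ => ?_)
  have hreal : ∑ j, (k j : ℂ) * z j = ((∑ j, (k j : ℝ) * z j : ℝ) : ℂ) := by push_cast; rfl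
  rw [norm_mul, hreal, Complex.norm_exp_I_mul_ofReal, mul_one]

lemma norm_trigPoly_le_supNorm {d : ℕ} (Q : Finset (Fin d → ℤ)) (c : (Fin d → ℤ) → ℂ)
    {z : Fin d → ℝ} (hz : z ∈ Set.univ.pi fun _ : Fin d => Set.Ico (0 : ℝ) (2 * π)) :
    ‖trigPoly d Q c z‖ ≤ supNorm d (trigPoly d Q c) := by
  unfold supNorm
  refine le_ciSup (f := fun z : ↥(Set.univ.pi fun _ : Fin d => Set.Ico (0 : ℝ) (2 * π)) =>
    ‖trigPoly d Q c z‖) ⟨∑ k ∈ Q, ‖c k‖, ?_⟩ ⟨z, hz⟩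
  rintro _ ⟨z, rfl⟩
  exact norm_trigPoly_le_sum d Q c z

lemma exists_sum_eq_and_le_two_pow {ι : Type*} [Fintype ι] [Nonempty ι] {L : ι → ℝ}
    (hL : ∀ i, 1 ≤ L i) {n : ℕ} (hprod : ∏ i, 2 * L i ≤ 2 ^ n) :
    ∃ s : ι → ℕ, ∑ i, s i = n ∧ ∀ i, L i ≤ 2 ^ s i := by
  classical
  have hnear : ∀ i, ∃ a : ℕ, L i ≤ 2 ^ a ∧ (2 : ℝ) ^ a ≤ 2 * L i := fun i => by
    obtain ⟨a, ha, ha'⟩ := exists_nat_pow_near (hL i) (one_lt_two (α := ℝ))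
    exact ⟨a + 1, ha'.le, by rw [pow_succ']; linarith⟩
  choose a hLa haL using hnear
  have hsum : ∑ i, a i ≤ n := by
    refine (pow_le_pow_iff_right₀ (one_lt_two (α := ℝ))).mp ?_
    rw [← prod_pow_eq_pow_sum]
    exact (prod_le_prod (fun i _ => by positivity) fun i _ => haL i).trans hprod
  let i₀ := Classical.arbitrary ι
  refine ⟨a + Pi.single i₀ (n - ∑ i, a i), ?_, fun i => (hLa i).trans ?_⟩
  · simp only [Pi.add_apply, sum_add_distrib, Finset.sum_pi_single', mem_univ, if_true]
    omega
  · exact pow_le_pow_right₀ one_le_two (Nat.le_add_right _ _)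

lemma norm_prod_le_div {ι : Type*} [Fintype ι] [DecidableEq ι] {a : ι → ℂ} {B : ι → ℝ} {K : ℝ}
    (ha : ∀ i, ‖a i‖ ≤ B i) {j : ι} (hj : ‖a j‖ ≤ B j / K) : ‖∏ i, a i‖ ≤ (∏ i, B i) / K := by
  calc ‖∏ i, a i‖ = ∏ i, ‖a i‖ := norm_prod _ _
    _ ≤ ∏ i, B i * if i = j then K⁻¹ else 1 :=
      prod_le_prod (fun i _ => norm_nonneg _) fun i _ => by
        split_ifs with h
        · subst h; rwa [← div_eq_mul_inv]
        · rw [mul_one]; exact ha i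
    _ = (∏ i, B i) / K := by
      rw [prod_mul_distrib, prod_ite_eq' univ j, if_pos (mem_univ j), div_eq_mul_inv]

lemma exists_trigPoly_small_on_of_empty_box {d : ℕ} {T : Finset (Fin d → ℝ)}
    (hT : ∀ t ∈ T, ∀ j, t j ∈ Set.Ico (0 : ℝ) 1) {x y : Fin d → ℝ}
    (hx : ∀ j, 0 ≤ x j) (hxy : ∀ j, x j < y j) (hy : ∀ j, y j ≤ 1)
    (havoid : ∀ t ∈ T, ∃ j, t j < x j ∨ y j ≤ t j) {K : ℝ} (hK : 0 < K) {s : Fin d → ℕ}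
    (hs : ∀ j, K ≤ (y j - x j) * 2 ^ s j) :
    ∃ coef : (Fin d → ℤ) → ℂ, 0 < supNorm d (trigPoly d (Rbox d s) coef) ∧
      K * ⨆ t : T, ‖trigPoly d (Rbox d s) coef (fun j => 2 * π * (t : Fin d → ℝ) j)‖ ≤
        supNorm d (trigPoly d (Rbox d s) coef) := by
  classical
  set θ : Fin d → ℝ := fun j => 2 * π * ((x j + y j) / 2) with hθ_def
  set f := trigPoly d (Rbox d s) fun k => Complex.exp (-(Complex.I * ∑ j, (k j : ℂ) * θ j))
    with hf_def
  have hf : ∀ z, f z = ∏ j, dirichletKernel (2 ^ s j) (z j - θ j) := fun z => by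
    rw [hf_def, trigPoly_translate, trigPoly_Rbox_one_eq_prod_dirichletKernel]; rfl
  have hN : ∀ j, 1 ≤ 2 ^ s j := fun j => Nat.one_le_two_pow
  have hN' : ∀ j, (1 : ℝ) ≤ ((2 ^ s j : ℕ) : ℝ) := fun j => by exact_mod_cast hN j
  set P := ∏ j, (2 * ((2 ^ s j : ℕ) : ℝ) - 1) with hP_def
  have hP : 1 ≤ P := Finset.one_le_prod fun j _ => by linarith [hN' j]
  have hθ : θ ∈ Set.univ.pi fun _ : Fin d => Set.Ico (0 : ℝ) (2 * π) := fun j _ => by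
    rw [hθ_def]
    constructor <;> nlinarith [pi_pos, hx j, hxy j, hy j]
  have hpeak : ‖f θ‖ = P := by
    rw [hf, norm_prod]
    refine prod_congr rfl fun j _ => ?_
    rw [sub_self, dirichletKernel_zero (hN j), show 2 * ((2 ^ s j : ℕ) : ℂ) - 1 =
      ((2 * ((2 ^ s j : ℕ) : ℝ) - 1 : ℝ) : ℂ) by push_cast; ring, Complex.norm_real,
      Real.norm_of_nonneg (by linarith [hN' j])]
  have hsmall : ∀ t ∈ T, ‖f fun j => 2 * π * t j‖ ≤ P / K := fun t ht => by
    obtain ⟨j, hj⟩ := havoid t ht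
    rw [hf, hP_def]
    refine norm_prod_le_div (j := j) (fun i => norm_dirichletKernel_le (hN i) _) ?_
    calc _ ≤ (y j - x j)⁻¹ :=
          norm_dirichletKernel_le_inv_of_lt_or_le (hx j) (hxy j) (hy j) (hT t ht j) hj _
      _ ≤ ((2 ^ s j : ℕ) : ℝ) / K := by
          rw [inv_le_iff_one_le_mul₀ (sub_pos.mpr (hxy j)), div_mul_eq_mul_div, le_div_iff₀ hK]
          push_cast; linarith [hs j]
      _ ≤ (2 * ((2 ^ s j : ℕ) : ℝ) - 1) / K := by gcongr; linarith [hN' j]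
  refine ⟨_, (zero_lt_one.trans_le hP).trans_le (hpeak ▸ norm_trigPoly_le_supNorm _ _ hθ), ?_⟩
  calc K * ⨆ t : T, ‖f fun j => 2 * π * (t : Fin d → ℝ) j‖ ≤ K * (P / K) := by
        gcongr
        exact Real.iSup_le (fun t => hsmall t t.2) (by positivity)
    _ = ‖f θ‖ := by rw [hpeak, mul_div_cancel₀ _ hK.ne']
    _ ≤ supNorm d f := norm_trigPoly_le_supNorm _ _ hθ

/-- (Temlyakov, inverse theorem) For every d >= 2 and every C_1 > 0 there exists C > 0
such that: if n in N and T ⊆ [0,1)^d is finite and for every s in N_0^d with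
s_1 + ... + s_d = n and every f in T(R(s)) one has C_1 ||f||_inf <= max_{x in T} |f(2πx)|,
then disp(T) <= C 2^{-n}. -/
theorem statement16 :
    ∀ d : ℕ, 2 ≤ d → ∀ C1 : ℝ, 0 < C1 → ∃ C : ℝ, 0 < C ∧
      ∀ n : ℕ, ∀ T : Finset (Fin d → ℝ),
        (∀ t ∈ T, ∀ j, t j ∈ Set.Ico (0 : ℝ) 1) →
        (∀ s : Fin d → ℕ, (∑ j, s j) = n →
          ∀ coef : (Fin d → ℤ) → ℂ,
            C1 * supNorm d (trigPoly d (Rbox d s) coef) ≤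
              ⨆ t : T, ‖
                (trigPoly d (Rbox d s) coef (fun j => 2 * Real.pi * (t : Fin d → ℝ) j))‖) →
        disp d ↑T ≤ C / 2 ^ n := by
  intro d hd C1 hC1
  have : Nonempty (Fin d) := ⟨⟨0, by omega⟩⟩
  set K := 1 + C1⁻¹ with hK
  have hK1 : 1 ≤ K := le_add_of_nonneg_right (inv_nonneg.mpr hC1.le)
  refine ⟨(2 * K) ^ d, by positivity, fun n T hT hyp => Real.sSup_le ?_ (by positivity)⟩
  rintro _ ⟨x, y, hbox, havoid, rfl⟩
  by_contra! hvol
  have hside : ∀ j, 0 < y j - x j := fun j => (sub_nonneg.mpr (hbox j).2.1).lt_of_ne'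
    (prod_ne_zero_iff.mp (hvol.trans_le' (by positivity)).ne' j (mem_univ j))
  have hprod : ∏ j, 2 * (K / (y j - x j)) ≤ 2 ^ n := by
    rw [prod_mul_distrib, prod_div_distrib, prod_const, prod_const, card_univ, Fintype.card_fin,
      ← mul_div_assoc, ← mul_pow, div_le_iff₀ (prod_pos fun j _ => hside j)]
    rw [div_lt_iff₀ (by positivity)] at hvol
    linarith
  obtain ⟨s, hsn, hs⟩ := exists_sum_eq_and_le_two_pow
    (fun j => (one_le_div (hside j)).mpr (by linarith [(hbox j).1, (hbox j).2.2])) hprod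
  obtain ⟨coef, hpos, hsmall⟩ := exists_trigPoly_small_on_of_empty_box hT (fun j => (hbox j).1)
    (fun j => sub_pos.mp (hside j)) (fun j => (hbox j).2.2) havoid (by positivity : 0 < K)
    (s := s) fun j => by have := hs j; rwa [div_le_iff₀ (hside j), mul_comm] at this
  have hlarge := hyp s hsn coef
  have hKC1 : K * C1 = C1 + 1 := by rw [hK, add_mul, one_mul, inv_mul_cancel₀ hC1.ne']
  nlinarith
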